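/- arXiv:1812.04176 — 2 statements merged into one kernel-verified Lean document; each statement's English description precedes it below -/
import Mathlib

section
/- Fix 0 < a9 < 1/(4d²π). For any φ_d ∈ [ρ_d, 1], it holds that f^E(x) < 2^{−(d+1)} (φ_d² − 2φ_d + (10/a8³) d a9) ‖x_*‖² + 2^{−(d+1)} ‖x_*‖² for all x ∈ B(φ_d x_*, a9 ‖x_*‖), and f^E(x) > 2^{−(d+1)} (φ_d² − 2φ_d ρ_d − 10 d³ a9) ‖x_*‖² + 2^{−(d+1)} ‖x_*‖² for all x ∈ B(−φ_d x_*, a9 ‖x_*‖), where a8 = inf_{d ≥ 2} ρ_d > 0. -/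
/-!
Write `θ_i = θ̄_{i,x,x_*}`. Since `cos (g θ) = ((π - θ) cos θ + sin θ) / π`, the coefficients of
`h̃` telescope to `⟨x, h̃_{x,x_*}⟩ = 2^{-d} ‖x‖ ‖x_*‖ cos θ_d`, hence
`2^{d+1} f^E(x) = ‖x‖² - 2 ‖x‖ ‖x_*‖ cos θ_d + ‖x_*‖²`.
As `(π - θ) cos θ + sin θ` decreases and `sin θ - θ cos θ` increases on `[0, π]`, `g` raises the
cosine, and along two ordered orbits of `g` the gap between the cosines shrinks. Comparing with
the orbit `θ̌_i` of `π` gives `cos θ_0 ≤ cos θ_d ≤ ρ_d + 1 + cos θ_0`, where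
`ρ_d = cos θ̌_d ≥ cos θ̌_2 = 1/π` (so `a8 = 1/π`).
The lower bound on `cos θ_d` gives `f^E(x) ≤ 2^{-(d+1)} ‖x - x_*‖²`, small near `φ x_*`. Near
`-φ x_*` the quantity `‖x‖ ‖x_*‖ (1 + cos θ_0) ≤ 2 ‖x + φ x_*‖ ‖x_*‖` is small, so the upper
bound makes `f^E(x)` at least about `2^{-(d+1)} (‖x‖² - 2 ρ_d ‖x‖ ‖x_*‖ + ‖x_*‖²)`.
-/

open scoped BigOperators NNReal
open Real Finset Matrix
open scoped Matrix

noncomputable section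

namespace CSGen

/-- Euclidean norm of a vector in `ℝ^m`. -/
def enorm {m : ℕ} (v : Fin m → ℝ) : ℝ := Real.sqrt (∑ i, (v i) ^ 2)

/-- Euclidean inner product. -/
def dotp {m : ℕ} (u v : Fin m → ℝ) : ℝ := ∑ i, u i * v i

/-- `relu` applied entrywise. -/
def relu {m : ℕ} (v : Fin m → ℝ) : Fin m → ℝ := fun i => max (v i) 0

/-- Zero out the rows of `W` at which the vector `v` is not positive. -/
def rowFilter {n k : ℕ} (W : Matrix (Fin n) (Fin k) ℝ) (v : Fin n → ℝ) :
    Matrix (Fin n) (Fin k) ℝ := fun i j => if 0 < v i then W i j else 0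

/-- `W_{+,x} = diag(Wx > 0) W`. -/
def posPart {n k : ℕ} (W : Matrix (Fin n) (Fin k) ℝ) (x : Fin k → ℝ) :
    Matrix (Fin n) (Fin k) ℝ := rowFilter W (W.mulVec x)

/-- Spectral norm of a matrix (operator norm w.r.t. Euclidean norms). -/
def specNorm {n k : ℕ} (M : Matrix (Fin n) (Fin k) ℝ) : ℝ :=
  ‖LinearMap.toContinuousLinearMap (Matrix.toEuclideanLin M)‖

/-- The angle `∠(x,y) = arccos(⟨x,y⟩/(‖x‖‖y‖))`. -/
def ang {k : ℕ} (x y : Fin k → ℝ) : ℝ :=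
  Real.arccos (dotp x y / (enorm x * enorm y))

/-- The matrix of the linear map `M_{x̂↔ŷ}` sending `x̂ ↦ ŷ`, `ŷ ↦ x̂`, and
`z ↦ 0` for `z ⊥ span{x,y}`. -/
def swapMat {k : ℕ} (x y : Fin k → ℝ) : Matrix (Fin k) (Fin k) ℝ :=
  let xh := (enorm x)⁻¹ • x
  let yh := (enorm y)⁻¹ • y
  let c := dotp xh yh
  if c = 1 then Matrix.vecMulVec xh xh
  else if c = -1 then -(Matrix.vecMulVec xh xh)
  else (1 - c ^ 2)⁻¹ •
    (Matrix.vecMulVec xh yh + Matrix.vecMulVec yh xh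
      - c • (Matrix.vecMulVec xh xh + Matrix.vecMulVec yh yh))

/-- The matrix `Q_{x,y}`. -/
def Qmat {k : ℕ} (x y : Fin k → ℝ) : Matrix (Fin k) (Fin k) ℝ :=
  ((π - ang x y) / (2 * π)) • (1 : Matrix (Fin k) (Fin k) ℝ)
    + (Real.sin (ang x y) / (2 * π)) • swapMat x y

/-- The Weight Distribution Condition with constant `ε`. -/
def WDC {n k : ℕ} (W : Matrix (Fin n) (Fin k) ℝ) (ε : ℝ) : Prop :=
  ∀ x y : Fin k → ℝ, x ≠ 0 → y ≠ 0 →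
    specNorm ((posPart W x)ᵀ * posPart W y - Qmat x y) ≤ ε

/-- The Range Restricted Isometry Condition of `A` with respect to `G`,
with constant `ε`. -/
def RRIC {m nd k : ℕ} (A : Matrix (Fin m) (Fin nd) ℝ)
    (G : (Fin k → ℝ) → (Fin nd → ℝ)) (ε : ℝ) : Prop :=
  ∀ x1 x2 x3 x4 : Fin k → ℝ,
    |dotp (A.mulVec (G x1 - G x2)) (A.mulVec (G x3 - G x4))
        - dotp (G x1 - G x2) (G x3 - G x4)|
      ≤ ε * enorm (G x1 - G x2) * enorm (G x3 - G x4)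

/-- Output of the `j`-th layer of the network:
`feat n W d = G = relu(W_d ⋯ relu(W_1 x) ⋯)`. -/
def feat (n : ℕ → ℕ) (W : ∀ i : ℕ, Matrix (Fin (n (i + 1))) (Fin (n i)) ℝ) :
    (j : ℕ) → (Fin (n 0) → ℝ) → (Fin (n j) → ℝ)
  | 0, x => x
  | (j + 1), x => relu ((W j).mulVec (feat n W j x))

/-- The matrix product `∏_{i=j}^{1} W_{i,+,x}`. -/
def lam (n : ℕ → ℕ) (W : ∀ i : ℕ, Matrix (Fin (n (i + 1))) (Fin (n i)) ℝ) :
    (j : ℕ) → (Fin (n 0) → ℝ) → Matrix (Fin (n j)) (Fin (n 0)) ℝ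
  | 0, _ => 1
  | (j + 1), x => rowFilter (W j) ((W j).mulVec (feat n W j x)) * lam n W j x

/-- The empirical risk `f(x) = (1/2)‖A G(x) − (A G(x_*) + e)‖²`. -/
def fobj {m : ℕ} (n : ℕ → ℕ) (W : ∀ i : ℕ, Matrix (Fin (n (i + 1))) (Fin (n i)) ℝ)
    (d : ℕ) (A : Matrix (Fin m) (Fin (n d)) ℝ) (xs : Fin (n 0) → ℝ) (e : Fin m → ℝ)
    (x : Fin (n 0) → ℝ) : ℝ :=
  (1 / 2) * (enorm (A.mulVec (feat n W d x) - (A.mulVec (feat n W d xs) + e))) ^ 2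

/-- `ṽ_x = (∏ W_{i,+,x})ᵀ Aᵀ (A (∏ W_{i,+,x}) x − y)`. -/
def vtil {m : ℕ} (n : ℕ → ℕ) (W : ∀ i : ℕ, Matrix (Fin (n (i + 1))) (Fin (n i)) ℝ)
    (d : ℕ) (A : Matrix (Fin m) (Fin (n d)) ℝ) (xs : Fin (n 0) → ℝ) (e : Fin m → ℝ)
    (x : Fin (n 0) → ℝ) : Fin (n 0) → ℝ :=
  Matrix.mulVec (lam n W d x)ᵀ (Matrix.mulVec Aᵀ
    (A.mulVec ((lam n W d x).mulVec x) - (A.mulVec (feat n W d xs) + e)))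

/-- `g(θ) = arccos((1/π)[(π−θ)cos θ + sin θ])`. -/
def gfun (θ : ℝ) : ℝ := Real.arccos ((1 / π) * ((π - θ) * Real.cos θ + Real.sin θ))

/-- `θ̄_{i,x,y}`. -/
def thetaBar {k : ℕ} (x y : Fin k → ℝ) : ℕ → ℝ
  | 0 => ang x y
  | (i + 1) => gfun (thetaBar x y i)

/-- `h̃_{x,y}` for a `d`-layer network. -/
def htil {k : ℕ} (d : ℕ) (x y : Fin k → ℝ) : Fin k → ℝ :=
  (((2 : ℝ) ^ d)⁻¹ * ∏ i ∈ Finset.range d, (π - thetaBar x y i) / π) • y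
    + (((2 : ℝ) ^ d)⁻¹ * ∑ i ∈ Finset.range d, (Real.sin (thetaBar x y i) / π)
        * ∏ j ∈ Finset.Ico (i + 1) d, (π - thetaBar x y j) / π) •
        (enorm y • (enorm x)⁻¹ • x)

/-- `h_{x,y} = 2^{−d} x − h̃_{x,y}`. -/
def hfun {k : ℕ} (d : ℕ) (x y : Fin k → ℝ) : Fin k → ℝ :=
  ((2 : ℝ) ^ d)⁻¹ • x - htil d x y

/-- `θ̌_i` with `θ̌_0 = π`. -/
def thetaCheck : ℕ → ℝ
  | 0 => π
  | (i + 1) => gfun (thetaCheck i)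

/-- `ρ_d`. -/
def rho (d : ℕ) : ℝ :=
  ∑ i ∈ Finset.range d, (Real.sin (thetaCheck i) / π)
    * ∏ j ∈ Finset.Ico (i + 1) d, (π - thetaCheck j) / π

/-- The expected risk `f^E`. -/
def fE {k : ℕ} (d : ℕ) (xs : Fin k → ℝ) (x : Fin k → ℝ) : ℝ :=
  ((2 : ℝ) ^ (d + 1))⁻¹ * dotp x x - dotp x (htil d x xs)
    + ((2 : ℝ) ^ (d + 1))⁻¹ * dotp xs xs

/-- Closed ball of radius `r` about `z` in the Euclidean norm. -/
def cball {k : ℕ} (z : Fin k → ℝ) (r : ℝ) : Set (Fin k → ℝ) :=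
  {x | enorm (x - z) ≤ r}

/-- The set `S_β`. -/
def Sset {k : ℕ} (d : ℕ) (xs : Fin k → ℝ) (β : ℝ) : Set (Fin k → ℝ) :=
  {x | x ≠ 0 ∧ enorm (hfun d x xs) ≤ ((2 : ℝ) ^ d)⁻¹ * β * max (enorm x) (enorm xs)}


open InnerProductGeometry

lemma pi_mem_Icc : π ∈ Set.Icc 0 π := ⟨pi_pos.le, le_rfl⟩



lemma hasDerivAt_sin_sub_mul_cos (θ : ℝ) :
    HasDerivAt (fun θ => sin θ - θ * cos θ) (θ * sin θ) θ :=
  ((hasDerivAt_sin θ).sub ((hasDerivAt_id' θ).mul (hasDerivAt_cos θ))).congr_deriv (by ring)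

lemma hasDerivAt_pi_sub_mul_cos_add_sin (θ : ℝ) :
    HasDerivAt (fun θ => (π - θ) * cos θ + sin θ) (-((π - θ) * sin θ)) θ :=
  ((((hasDerivAt_id' θ).const_sub π).mul (hasDerivAt_cos θ)).add (hasDerivAt_sin θ)).congr_deriv
    (by ring)

lemma monotoneOn_sin_sub_mul_cos : MonotoneOn (fun θ => sin θ - θ * cos θ) (Set.Icc 0 π) := by
  refine monotoneOn_of_hasDerivWithinAt_nonneg (convex_Icc 0 π) (by fun_prop)
    (fun θ _ => (hasDerivAt_sin_sub_mul_cos θ).hasDerivWithinAt) fun θ hθ => ?_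
  rw [interior_Icc] at hθ
  exact mul_nonneg hθ.1.le (sin_nonneg_of_nonneg_of_le_pi hθ.1.le hθ.2.le)

lemma antitoneOn_pi_sub_mul_cos_add_sin :
    AntitoneOn (fun θ => (π - θ) * cos θ + sin θ) (Set.Icc 0 π) := by
  refine antitoneOn_of_hasDerivWithinAt_nonpos (convex_Icc 0 π) (by fun_prop)
    (fun θ _ => (hasDerivAt_pi_sub_mul_cos_add_sin θ).hasDerivWithinAt) fun θ hθ => ?_
  rw [interior_Icc] at hθ
  exact neg_nonpos.2 <|
    mul_nonneg (by linarith [hθ.2]) (sin_nonneg_of_nonneg_of_le_pi hθ.1.le hθ.2.le)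

lemma pi_sub_mul_cos_add_sin_mem {θ : ℝ} (hθ : θ ∈ Set.Icc 0 π) :
    (π - θ) * cos θ + sin θ ∈ Set.Icc 0 π := by
  have h0 : (0 : ℝ) ∈ Set.Icc 0 π := ⟨le_rfl, pi_pos.le⟩
  constructor
  · simpa using antitoneOn_pi_sub_mul_cos_add_sin hθ pi_mem_Icc hθ.2
  · simpa using antitoneOn_pi_sub_mul_cos_add_sin h0 hθ hθ.1

lemma gfun_mem (θ : ℝ) : gfun θ ∈ Set.Icc 0 π :=
  ⟨arccos_nonneg _, arccos_le_pi _⟩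

lemma cos_gfun {θ : ℝ} (hθ : θ ∈ Set.Icc 0 π) :
    cos (gfun θ) = ((π - θ) * cos θ + sin θ) / π := by
  have hF := pi_sub_mul_cos_add_sin_mem hθ
  rw [gfun, one_div_mul_eq_div, cos_arccos]
  · linarith [div_nonneg hF.1 pi_pos.le]
  · rw [div_le_one pi_pos]
    exact hF.2

lemma cos_le_cos_gfun {θ : ℝ} (hθ : θ ∈ Set.Icc 0 π) : cos θ ≤ cos (gfun θ) := by
  have h := monotoneOn_sin_sub_mul_cos ⟨le_rfl, pi_pos.le⟩ hθ hθ.1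
  simp only [sin_zero, zero_mul, sub_zero] at h
  rw [cos_gfun hθ, le_div_iff₀ pi_pos]
  linarith

lemma gfun_le_gfun {a b : ℝ} (ha : a ∈ Set.Icc 0 π) (hb : b ∈ Set.Icc 0 π) (hab : a ≤ b) :
    gfun a ≤ gfun b :=
  arccos_le_arccos <| mul_le_mul_of_nonneg_left (antitoneOn_pi_sub_mul_cos_add_sin ha hb hab)
    (by positivity)

lemma cos_gfun_sub_cos_gfun_le {a b : ℝ} (ha : a ∈ Set.Icc 0 π) (hb : b ∈ Set.Icc 0 π)
    (hab : a ≤ b) : cos (gfun a) - cos (gfun b) ≤ cos a - cos b := by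
  have h := monotoneOn_sin_sub_mul_cos ha hb hab
  simp only at h
  rw [cos_gfun ha, cos_gfun hb, ← sub_div, div_le_iff₀ pi_pos]
  linarith

lemma iterate_gfun_mem {θ : ℝ} (hθ : θ ∈ Set.Icc 0 π) : ∀ n, gfun^[n] θ ∈ Set.Icc 0 π
  | 0 => hθ
  | n + 1 => by rw [Function.iterate_succ_apply']; exact gfun_mem _

lemma cos_le_cos_iterate_gfun {θ : ℝ} (hθ : θ ∈ Set.Icc 0 π) (n : ℕ) :
    cos θ ≤ cos (gfun^[n] θ) := by
  induction n with
  | zero => rfl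
  | succ n ih =>
    rw [Function.iterate_succ_apply']
    exact ih.trans (cos_le_cos_gfun (iterate_gfun_mem hθ n))

lemma iterate_gfun_le_and_cos_sub_le {a b : ℝ} (ha : a ∈ Set.Icc 0 π) (hb : b ∈ Set.Icc 0 π)
    (hab : a ≤ b) (n : ℕ) :
    gfun^[n] a ≤ gfun^[n] b ∧ cos (gfun^[n] a) - cos (gfun^[n] b) ≤ cos a - cos b := by
  induction n with
  | zero => exact ⟨hab, le_rfl⟩
  | succ n ih =>
    rw [Function.iterate_succ_apply', Function.iterate_succ_apply']
    have ha' := iterate_gfun_mem ha n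
    have hb' := iterate_gfun_mem hb n
    exact ⟨gfun_le_gfun ha' hb' ih.1, (cos_gfun_sub_cos_gfun_le ha' hb' ih.1).trans ih.2⟩

/-- Both sides `c d` obey `c (d + 1) = ((π - θ_d) c d + sin θ_d) / π`, the recursion of
`cos θ_d` given by `cos_gfun`. -/
lemma prod_mul_cos_add_sum_eq_cos_iterate_gfun {θ : ℝ} (hθ : θ ∈ Set.Icc 0 π) (d : ℕ) :
    (∏ i ∈ range d, (π - gfun^[i] θ) / π) * cos θ
      + ∑ i ∈ range d, (sin (gfun^[i] θ) / π) * ∏ j ∈ Ico (i + 1) d, (π - gfun^[j] θ) / π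
      = cos (gfun^[d] θ) := by
  induction d with
  | zero => simp
  | succ n ih =>
    have hsum : ∑ i ∈ range (n + 1), (sin (gfun^[i] θ) / π)
          * ∏ j ∈ Ico (i + 1) (n + 1), (π - gfun^[j] θ) / π
        = (∑ i ∈ range n, (sin (gfun^[i] θ) / π) * ∏ j ∈ Ico (i + 1) n, (π - gfun^[j] θ) / π)
            * ((π - gfun^[n] θ) / π) + sin (gfun^[n] θ) / π := by
      rw [sum_range_succ, Ico_self, prod_empty, mul_one, sum_mul]
      congr 1
      refine sum_congr rfl fun i hi => ?_
      rw [prod_Ico_succ_top (Nat.succ_le_of_lt (mem_range.1 hi))]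
      ring
    rw [prod_range_succ, hsum, Function.iterate_succ_apply', cos_gfun (iterate_gfun_mem hθ n)]
    linear_combination ((π - gfun^[n] θ) / π) * ih

lemma thetaBar_eq_iterate {k : ℕ} (x y : Fin k → ℝ) :
    thetaBar x y = fun i => gfun^[i] (ang x y) := by
  funext i
  induction i with
  | zero => rfl
  | succ i ih => rw [Function.iterate_succ_apply', ← ih]; rfl

lemma thetaCheck_eq_iterate : thetaCheck = fun i => gfun^[i] π := by
  funext i
  induction i with
  | zero => rfl
  | succ i ih => rw [Function.iterate_succ_apply', ← ih]; rfl

lemma rho_eq_cos_iterate_gfun {d : ℕ} (hd : 1 ≤ d) : rho d = cos (gfun^[d] π) := by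
  have h := prod_mul_cos_add_sum_eq_cos_iterate_gfun pi_mem_Icc d
  rw [prod_eq_zero (mem_range.2 hd) (by simp), zero_mul, zero_add] at h
  rw [rho, thetaCheck_eq_iterate, h]

lemma cos_iterate_gfun_two_pi : cos (gfun^[2] π) = π⁻¹ := by
  have h1 : gfun π = π / 2 := by simp [gfun]
  have hmem : π / 2 ∈ Set.Icc 0 π := ⟨by positivity, by linarith [pi_pos]⟩
  rw [Function.iterate_succ_apply', Function.iterate_one, h1, cos_gfun hmem]
  simp

lemma inv_pi_le_rho {d : ℕ} (hd : 2 ≤ d) : π⁻¹ ≤ rho d := by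
  obtain ⟨n, rfl⟩ := Nat.exists_eq_add_of_le' hd
  rw [rho_eq_cos_iterate_gfun (by omega), Function.iterate_add_apply, ← cos_iterate_gfun_two_pi]
  exact cos_le_cos_iterate_gfun (iterate_gfun_mem pi_mem_Icc 2) n

lemma iInf_rho_eq_inv_pi : ⨅ d : {d : ℕ // 2 ≤ d}, rho d = π⁻¹ := by
  refine le_antisymm ?_ (le_ciInf fun d => inv_pi_le_rho d.2)
  have hbdd : BddBelow (Set.range fun d : {d : ℕ // 2 ≤ d} => rho d) :=
    ⟨π⁻¹, by rintro _ ⟨d, rfl⟩; exact inv_pi_le_rho d.2⟩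
  calc ⨅ d : {d : ℕ // 2 ≤ d}, rho d ≤ rho 2 := ciInf_le hbdd ⟨2, le_rfl⟩
    _ = π⁻¹ := by rw [rho_eq_cos_iterate_gfun (by norm_num), cos_iterate_gfun_two_pi]

section Euclidean

variable {m : ℕ}

lemma enorm_eq_norm (v : Fin m → ℝ) : enorm v = ‖(WithLp.toLp 2 v : EuclideanSpace ℝ (Fin m))‖ := by
  simp [enorm, EuclideanSpace.norm_eq]

lemma dotp_eq_inner (u v : Fin m → ℝ) :
    dotp u v = inner ℝ (WithLp.toLp 2 u : EuclideanSpace ℝ (Fin m)) (WithLp.toLp 2 v) := by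
  simp [dotp, PiLp.inner_apply, mul_comm]

lemma ang_eq_angle (x y : Fin m → ℝ) :
    ang x y = angle (WithLp.toLp 2 x : EuclideanSpace ℝ (Fin m)) (WithLp.toLp 2 y) := by
  rw [ang, angle, dotp_eq_inner, enorm_eq_norm, enorm_eq_norm]

lemma mem_cball_iff {x z : Fin m → ℝ} {r : ℝ} :
    x ∈ cball z r ↔ ‖(WithLp.toLp 2 x : EuclideanSpace ℝ (Fin m)) - WithLp.toLp 2 z‖ ≤ r := by
  change enorm (x - z) ≤ r ↔ _
  rw [enorm_eq_norm, WithLp.toLp_sub]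

end Euclidean

lemma inv_norm_mul_norm_sq {E : Type*} [SeminormedAddCommGroup E] (x : E) :
    ‖x‖⁻¹ * ‖x‖ ^ 2 = ‖x‖ := by
  rcases eq_or_ne ‖x‖ 0 with h | h
  · simp [h]
  · field_simp

lemma fE_eq {k : ℕ} (d : ℕ) (y x : Fin k → ℝ) :
    fE d y x = ((2 : ℝ) ^ (d + 1))⁻¹ * (‖WithLp.toLp 2 x‖ ^ 2
      - 2 * (‖WithLp.toLp 2 x‖ * ‖WithLp.toLp 2 y‖
        * cos (gfun^[d] (angle (WithLp.toLp 2 x) (WithLp.toLp 2 y)))) + ‖WithLp.toLp 2 y‖ ^ 2) := by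
  set X : EuclideanSpace ℝ (Fin k) := WithLp.toLp 2 x
  set Y : EuclideanSpace ℝ (Fin k) := WithLp.toLp 2 y
  have hangle : angle X Y ∈ Set.Icc 0 π := ⟨angle_nonneg X Y, angle_le_pi X Y⟩
  have htel := prod_mul_cos_add_sum_eq_cos_iterate_gfun hangle d
  have hcos := cos_angle_mul_norm_mul_norm X Y
  simp only [fE, htil, thetaBar_eq_iterate, ang_eq_angle, dotp_eq_inner, enorm_eq_norm,
    WithLp.toLp_add, WithLp.toLp_smul, inner_add_right, inner_smul_right,
    real_inner_self_eq_norm_sq]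
  rw [← htel, ← hcos, inv_norm_mul_norm_sq, pow_succ]
  ring

section InnerProductSpace

variable {V : Type*} [NormedAddCommGroup V] [InnerProductSpace ℝ V]

lemma inner_le_norm_mul_norm_mul_cos_iterate_gfun_angle (x y : V) (d : ℕ) :
    inner ℝ x y ≤ ‖x‖ * ‖y‖ * cos (gfun^[d] (angle x y)) := by
  rw [← cos_angle_mul_norm_mul_norm, mul_comm]
  exact mul_le_mul_of_nonneg_left
    (cos_le_cos_iterate_gfun ⟨angle_nonneg x y, angle_le_pi x y⟩ d) (by positivity)

lemma norm_mul_norm_mul_cos_iterate_gfun_angle_le (x y : V) {d : ℕ} (hd : 1 ≤ d) :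
    ‖x‖ * ‖y‖ * cos (gfun^[d] (angle x y)) ≤ ‖x‖ * ‖y‖ * (rho d + 1) + inner ℝ x y := by
  have h := (iterate_gfun_le_and_cos_sub_le ⟨angle_nonneg x y, angle_le_pi x y⟩ pi_mem_Icc
    (angle_le_pi x y) d).2
  rw [cos_pi, ← rho_eq_cos_iterate_gfun hd] at h
  rw [← cos_angle_mul_norm_mul_norm]
  nlinarith [mul_nonneg (norm_nonneg x) (norm_nonneg y)]

lemma norm_mul_norm_add_inner_le (x y : V) {φ : ℝ} (hφ : 0 ≤ φ) :
    ‖x‖ * ‖y‖ + inner ℝ x y ≤ 2 * ‖x + φ • y‖ * ‖y‖ := by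
  have hx : ‖x‖ ≤ ‖x + φ • y‖ + φ * ‖y‖ := by
    simpa [norm_smul, abs_of_nonneg hφ] using norm_sub_le (x + φ • y) (φ • y)
  have hinner : inner ℝ x y = inner ℝ (x + φ • y) y - φ * ‖y‖ ^ 2 := by
    rw [inner_add_left, real_inner_smul_left, real_inner_self_eq_norm_sq]
    ring
  nlinarith [real_inner_le_norm (x + φ • y) y, norm_nonneg y]

end InnerProductSpace

lemma fE_le_norm_sub_sq {k : ℕ} (d : ℕ) (y x : Fin k → ℝ) :
    fE d y x ≤ ((2 : ℝ) ^ (d + 1))⁻¹ * ‖WithLp.toLp 2 x - WithLp.toLp 2 y‖ ^ 2 := by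
  rw [fE_eq, norm_sub_sq_real]
  gcongr
  exact inner_le_norm_mul_norm_mul_cos_iterate_gfun_angle _ _ d

section Landscape

variable {k d : ℕ} {x y : Fin k → ℝ} {φ a K : ℝ}

lemma fE_lt_of_mem_cball_smul (hy : y ≠ 0) (ha : 0 < a) (hx : x ∈ cball (φ • y) (a * enorm y))
    (hφ : φ ≤ 1) (hK : 2 * (1 - φ) + a < K) :
    fE d y x < ((2 : ℝ) ^ (d + 1))⁻¹ * (φ ^ 2 - 2 * φ + K * a) * enorm y ^ 2
      + ((2 : ℝ) ^ (d + 1))⁻¹ * enorm y ^ 2 := by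
  rw [mem_cball_iff, WithLp.toLp_smul, enorm_eq_norm] at hx
  rw [enorm_eq_norm]
  set X : EuclideanSpace ℝ (Fin k) := WithLp.toLp 2 x
  set Y : EuclideanSpace ℝ (Fin k) := WithLp.toLp 2 y
  have hY : 0 < ‖Y‖ := norm_pos_iff.2 (by simpa [Y] using hy)
  have hdist : ‖X - Y‖ ≤ (a + (1 - φ)) * ‖Y‖ := by
    rw [show X - Y = (X - φ • Y) - (1 - φ) • Y by module]
    refine (norm_sub_le _ _).trans ?_
    rw [norm_smul, Real.norm_of_nonneg (sub_nonneg.2 hφ)]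
    linarith
  have hgap : (a + (1 - φ)) ^ 2 < (1 - φ) ^ 2 + K * a := by nlinarith
  calc fE d y x ≤ ((2 : ℝ) ^ (d + 1))⁻¹ * ‖X - Y‖ ^ 2 := fE_le_norm_sub_sq d y x
    _ ≤ ((2 : ℝ) ^ (d + 1))⁻¹ * ((a + (1 - φ)) * ‖Y‖) ^ 2 := by gcongr
    _ < ((2 : ℝ) ^ (d + 1))⁻¹ * ((1 - φ) ^ 2 + K * a) * ‖Y‖ ^ 2 := by
      rw [mul_pow, ← mul_assoc]
      gcongr
    _ = _ := by ring

lemma lt_fE_of_mem_cball_neg_smul (hd : 1 ≤ d) (hy : y ≠ 0) (ha : 0 < a)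
    (hx : x ∈ cball (-(φ • y)) (a * enorm y)) (hφ : 0 ≤ φ) (hρφ : rho d ≤ φ)
    (hK : 4 + 2 * (φ - rho d) < K) :
    ((2 : ℝ) ^ (d + 1))⁻¹ * (φ ^ 2 - 2 * φ * rho d - K * a) * enorm y ^ 2
      + ((2 : ℝ) ^ (d + 1))⁻¹ * enorm y ^ 2 < fE d y x := by
  rw [mem_cball_iff, WithLp.toLp_neg, WithLp.toLp_smul, sub_neg_eq_add] at hx
  rw [fE_eq, enorm_eq_norm] at *
  set X : EuclideanSpace ℝ (Fin k) := WithLp.toLp 2 x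
  set Y : EuclideanSpace ℝ (Fin k) := WithLp.toLp 2 y
  have hY : 0 < ‖Y‖ := norm_pos_iff.2 (by simpa [Y] using hy)
  have hnorm : |‖X‖ - φ * ‖Y‖| ≤ a * ‖Y‖ := by
    have h := abs_norm_sub_norm_le X (-(φ • Y))
    rw [norm_neg, norm_smul, Real.norm_of_nonneg hφ, sub_neg_eq_add] at h
    exact h.trans hx
  have hcos := norm_mul_norm_mul_cos_iterate_gfun_angle_le X Y hd
  have hinner := norm_mul_norm_add_inner_le X Y hφ
  set ρ := rho d
  -- `‖X‖ ^ 2 - 2ρ ‖X‖ ‖Y‖ = (φ ^ 2 - 2φρ) ‖Y‖ ^ 2 + u ^ 2 + 2u (φ - ρ) ‖Y‖`, `u = ‖X‖ - φ ‖Y‖`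
  have hquad : (φ ^ 2 - 2 * φ * ρ) * ‖Y‖ ^ 2 - 2 * (φ - ρ) * a * ‖Y‖ ^ 2
      ≤ ‖X‖ ^ 2 - 2 * ρ * ‖X‖ * ‖Y‖ := by
    obtain ⟨hl, hu⟩ := abs_le.1 hnorm
    nlinarith [sq_nonneg (‖X‖ - φ * ‖Y‖), mul_nonneg (sub_nonneg.2 hρφ) (mul_nonneg ha.le hY.le)]
  have hmain : (φ ^ 2 - 2 * φ * ρ - K * a) * ‖Y‖ ^ 2
      < ‖X‖ ^ 2 - 2 * (‖X‖ * ‖Y‖ * cos (gfun^[d] (angle X Y))) := by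
    nlinarith [mul_lt_mul_of_pos_right hK (mul_pos ha (pow_pos hY 2)),
      mul_le_mul_of_nonneg_right hx hY.le]
  linarith [mul_lt_mul_of_pos_left hmain (by positivity : (0 : ℝ) < ((2 : ℝ) ^ (d + 1))⁻¹)]

end Landscape

theorem statement_13_general (d k : ℕ) (hd : 2 ≤ d)
    (xs : Fin k → ℝ) (hxs : xs ≠ 0) (a9 : ℝ) (h9pos : 0 < a9)
    (h9 : a9 < 1 / (4 * (d : ℝ) ^ 2 * π)) :
    (0 < ⨅ d' : {d' : ℕ // 2 ≤ d'}, rho d') ∧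
    ∀ φ : ℝ, rho d ≤ φ → φ ≤ 1 →
      (∀ x ∈ cball (φ • xs) (a9 * enorm xs),
        fE d xs x < ((2 : ℝ) ^ (d + 1))⁻¹
            * (φ ^ 2 - 2 * φ
                + (10 / (⨅ d' : {d' : ℕ // 2 ≤ d'}, rho d') ^ 3) * (d : ℝ) * a9)
            * enorm xs ^ 2
          + ((2 : ℝ) ^ (d + 1))⁻¹ * enorm xs ^ 2) ∧
      (∀ x ∈ cball (-(φ • xs)) (a9 * enorm xs),
        ((2 : ℝ) ^ (d + 1))⁻¹ * (φ ^ 2 - 2 * φ * rho d - 10 * (d : ℝ) ^ 3 * a9)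
            * enorm xs ^ 2
          + ((2 : ℝ) ^ (d + 1))⁻¹ * enorm xs ^ 2 < fE d xs x) := by
  have hρ : π⁻¹ ≤ rho d := inv_pi_le_rho hd
  have hπ : 0 < π⁻¹ ∧ π⁻¹ ≤ 1 := ⟨by positivity, inv_le_one_of_one_le₀ (by linarith [pi_gt_three])⟩
  have hd' : (2 : ℝ) ≤ d := by exact_mod_cast hd
  have ha : a9 < 1 := h9.trans_le <| by
    rw [div_le_one (by positivity)]
    nlinarith [pi_gt_three]
  rw [iInf_rho_eq_inv_pi]
  refine ⟨hπ.1, fun φ hρφ hφ => ⟨fun x hx => ?_, fun x hx => ?_⟩⟩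
  · refine fE_lt_of_mem_cball_smul hxs h9pos hx hφ ?_
    have h10 : 10 ≤ 10 / π⁻¹ ^ 3 :=
      le_div_self (by norm_num) (by positivity) (pow_le_one₀ hπ.1.le hπ.2)
    nlinarith
  · refine lt_fE_of_mem_cball_neg_smul (by omega) hxs h9pos hx (by linarith) hρφ ?_
    nlinarith

theorem statement_13 (d k : ℕ) (hd : 2 ≤ d) (hk : 1 ≤ k)
    (xs : Fin k → ℝ) (hxs : xs ≠ 0) (a9 : ℝ) (h9pos : 0 < a9)
    (h9 : a9 < 1 / (4 * (d : ℝ) ^ 2 * π)) :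
    (0 < ⨅ d' : {d' : ℕ // 2 ≤ d'}, rho d') ∧
    ∀ φ : ℝ, rho d ≤ φ → φ ≤ 1 →
      (∀ x ∈ cball (φ • xs) (a9 * enorm xs),
        fE d xs x < ((2 : ℝ) ^ (d + 1))⁻¹
            * (φ ^ 2 - 2 * φ
                + (10 / (⨅ d' : {d' : ℕ // 2 ≤ d'}, rho d') ^ 3) * (d : ℝ) * a9)
            * enorm xs ^ 2
          + ((2 : ℝ) ^ (d + 1))⁻¹ * enorm xs ^ 2) ∧
      (∀ x ∈ cball (-(φ • xs)) (a9 * enorm xs),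
        ((2 : ℝ) ^ (d + 1))⁻¹ * (φ ^ 2 - 2 * φ * rho d - 10 * (d : ℝ) ^ 3 * a9)
            * enorm xs ^ 2
          + ((2 : ℝ) ^ (d + 1))⁻¹ * enorm xs ^ 2 < fE d xs x) :=
  statement_13_general d k hd xs hxs a9 h9pos h9

end CSGen
end
end

section
/- Suppose W ∈ ℝ^{n×k} satisfies the WDC with constant ε. Then for any nonzero x, y ∈ ℝ^k, ‖W_{+,x} x − W_{+,y} y‖ ≤ (√(1/2 + ε) + √(2(2ε + θ))) ‖x − y‖, where θ = ∠(x, y). -/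
open scoped BigOperators NNReal
open Real Finset Matrix
open scoped Matrix

noncomputable section

namespace CSGen

/-!
Write `W₊ₓ x - W₊ᵧ y = W₊ₓ (x - y) + (W₊ₓ - W₊ᵧ) y`. Since `Q_{x,x} = I/2`, the WDC at `(x, x)`
bounds the first term by `√(1/2 + ε) ‖x - y‖`. In the second term only rows `w` on which
`w·x` and `w·y` have opposite signs survive, and on those `|w·y| ≤ |w·(x - y)|`; so it is at most
`‖(W₊ₓ - W₊ᵧ)(x - y)‖`. The square of the latter expands into four WDC quadratic forms, and since
`|uᵀ M_{x̂↔ŷ} u| ≤ ‖u‖²` (a Gram determinant inequality) it is at most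
`(4ε + (θ + sin θ)/π) ‖x - y‖² ≤ 2 (2ε + θ) ‖x - y‖²`.
-/

section Euclidean

variable {m : ℕ}

lemma dotp_eq_dotProduct (u v : Fin m → ℝ) : dotp u v = u ⬝ᵥ v := rfl

lemma enorm_eq_norm_toLp (v : Fin m → ℝ) : enorm v = ‖WithLp.toLp 2 v‖ := by
  simp [enorm, EuclideanSpace.norm_eq, Real.norm_eq_abs, sq_abs]

lemma enorm_eq_sqrt_dotProduct (v : Fin m → ℝ) : enorm v = √(v ⬝ᵥ v) := by
  simp [enorm, dotProduct, sq]

lemma dotProduct_self_nonneg (v : Fin m → ℝ) : 0 ≤ v ⬝ᵥ v :=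
  Finset.sum_nonneg fun i _ => mul_self_nonneg (v i)

lemma enorm_pos {x : Fin m → ℝ} (hx : x ≠ 0) : 0 < enorm x := by
  rw [enorm_eq_norm_toLp]
  simpa using hx

lemma enorm_add_le (u v : Fin m → ℝ) : enorm (u + v) ≤ enorm u + enorm v := by
  simpa only [enorm_eq_norm_toLp, WithLp.toLp_add] using
    norm_add_le (WithLp.toLp 2 u) (WithLp.toLp 2 v)

lemma abs_dotProduct_le (u v : Fin m → ℝ) : |u ⬝ᵥ v| ≤ enorm u * enorm v := by
  simpa [enorm_eq_norm_toLp, EuclideanSpace.inner_toLp_toLp, dotProduct_comm v u] using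
    abs_real_inner_le_norm (WithLp.toLp 2 u) (WithLp.toLp 2 v)

lemma sq_dotProduct_le (u v : Fin m → ℝ) : (u ⬝ᵥ v) ^ 2 ≤ (u ⬝ᵥ u) * (v ⬝ᵥ v) := by
  rw [← sq_abs, ← Real.sq_sqrt (dotProduct_self_nonneg u),
    ← Real.sq_sqrt (dotProduct_self_nonneg v), ← mul_pow]
  exact pow_le_pow_left₀ (abs_nonneg _)
    (by simpa [enorm_eq_sqrt_dotProduct] using abs_dotProduct_le u v) 2

lemma enorm_le_sqrt_mul_enorm {n : ℕ} {v : Fin n → ℝ} {u : Fin m → ℝ} {s : ℝ}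
    (h : v ⬝ᵥ v ≤ s * (u ⬝ᵥ u)) : enorm v ≤ √s * enorm u := by
  rw [enorm_eq_sqrt_dotProduct, enorm_eq_sqrt_dotProduct,
    ← Real.sqrt_mul' s (dotProduct_self_nonneg u)]
  exact Real.sqrt_le_sqrt h

lemma enorm_mulVec_le {n : ℕ} (M : Matrix (Fin n) (Fin m) ℝ) (v : Fin m → ℝ) :
    enorm (M *ᵥ v) ≤ specNorm M * enorm v := by
  rw [enorm_eq_norm_toLp, enorm_eq_norm_toLp]
  exact (LinearMap.toContinuousLinearMap (Matrix.toEuclideanLin M)).le_opNorm (WithLp.toLp 2 v)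

lemma abs_dotProduct_mulVec_le (M : Matrix (Fin m) (Fin m) ℝ) (u : Fin m → ℝ) :
    |u ⬝ᵥ M *ᵥ u| ≤ specNorm M * (u ⬝ᵥ u) := by
  calc |u ⬝ᵥ M *ᵥ u| ≤ enorm u * (specNorm M * enorm u) :=
        (abs_dotProduct_le u _).trans
          (mul_le_mul_of_nonneg_left (enorm_mulVec_le M u) (Real.sqrt_nonneg _))
    _ = specNorm M * (u ⬝ᵥ u) := by
        rw [enorm_eq_sqrt_dotProduct]
        linear_combination specNorm M * Real.sq_sqrt (dotProduct_self_nonneg u)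

end Euclidean

section SwapMat

variable {m : ℕ}

lemma dotProduct_self_normalize {x : Fin m → ℝ} (hx : x ≠ 0) :
    ((enorm x)⁻¹ • x) ⬝ᵥ ((enorm x)⁻¹ • x) = 1 := by
  have h := (enorm_pos hx).ne'
  rw [smul_dotProduct, dotProduct_smul, smul_eq_mul, smul_eq_mul,
    ← Real.sq_sqrt (dotProduct_self_nonneg x), ← enorm_eq_sqrt_dotProduct]
  field_simp

lemma dotProduct_vecMulVec_mulVec (p q u : Fin m → ℝ) :
    u ⬝ᵥ vecMulVec p q *ᵥ u = (u ⬝ᵥ p) * (q ⬝ᵥ u) := by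
  simp [vecMulVec_mulVec, dotProduct_smul, mul_comm]

/-- The right-hand side is the Gram determinant of `p, q, u`; the vector `w` in the proof is
`1 - c²` times the component of `u` orthogonal to `p` and `q`. -/
lemma gram_det_nonneg {p q : Fin m → ℝ} (hp : p ⬝ᵥ p = 1) (hq : q ⬝ᵥ q = 1)
    (hpq : (p ⬝ᵥ q) ^ 2 < 1) (u : Fin m → ℝ) :
    0 ≤ (1 - (p ⬝ᵥ q) ^ 2) * (u ⬝ᵥ u) - (p ⬝ᵥ u) ^ 2 - (q ⬝ᵥ u) ^ 2
      + 2 * (p ⬝ᵥ u) * (q ⬝ᵥ u) * (p ⬝ᵥ q) := by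
  set a := p ⬝ᵥ u
  set b := q ⬝ᵥ u
  set c := p ⬝ᵥ q
  set w := (1 - c ^ 2) • u - (a - b * c) • p - (b - a * c) • q
  have hw : w ⬝ᵥ w
      = (1 - c ^ 2) * ((1 - c ^ 2) * (u ⬝ᵥ u) - a ^ 2 - b ^ 2 + 2 * a * b * c) := by
    simp only [w, sub_dotProduct, dotProduct_sub, smul_dotProduct, dotProduct_smul, smul_eq_mul,
      hp, hq, dotProduct_comm q p, dotProduct_comm u p, dotProduct_comm u q]
    ring
  nlinarith [dotProduct_self_nonneg w]

lemma abs_dotProduct_swapMat_mulVec_le {x y : Fin m → ℝ} (hx : x ≠ 0) (hy : y ≠ 0)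
    (u : Fin m → ℝ) : |u ⬝ᵥ swapMat x y *ᵥ u| ≤ u ⬝ᵥ u := by
  have hp := dotProduct_self_normalize hx
  have hq := dotProduct_self_normalize hy
  simp only [swapMat]
  generalize (enorm x)⁻¹ • x = p at hp ⊢
  generalize (enorm y)⁻¹ • y = q at hq ⊢
  have hpq : (p ⬝ᵥ q) ^ 2 ≤ 1 := by simpa [hp, hq] using sq_dotProduct_le p q
  have hpu : (p ⬝ᵥ u) ^ 2 ≤ u ⬝ᵥ u := by simpa [hp] using sq_dotProduct_le p u
  have hsq : |u ⬝ᵥ vecMulVec p p *ᵥ u| ≤ u ⬝ᵥ u := by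
    rw [dotProduct_vecMulVec_mulVec, dotProduct_comm u p, abs_mul_self, ← sq]
    exact hpu
  split_ifs with h1 h2
  · exact hsq
  · rwa [neg_mulVec, dotProduct_neg, abs_neg]
  rw [dotp_eq_dotProduct] at h1 h2 ⊢
  have hpq' : (p ⬝ᵥ q) ^ 2 < 1 := hpq.lt_of_ne fun h => (sq_eq_one_iff.mp h).elim h1 h2
  have hgram := gram_det_nonneg hp hq hpq' u
  simp only [smul_mulVec, sub_mulVec, add_mulVec, dotProduct_smul, dotProduct_sub,
    dotProduct_add, dotProduct_vecMulVec_mulVec, smul_eq_mul, dotProduct_comm u p,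
    dotProduct_comm u q]
  set a := p ⬝ᵥ u
  set b := q ⬝ᵥ u
  set c := p ⬝ᵥ q
  have hc := abs_le.mp (sq_le_one_iff_abs_le_one c |>.mp hpq)
  have hpos : 0 < 1 - c ^ 2 := sub_pos.mpr hpq'
  rw [abs_mul, abs_inv, abs_of_pos hpos, inv_mul_le_iff₀ hpos, abs_le]
  constructor <;> nlinarith [mul_nonneg (neg_le_iff_add_nonneg.mp hc.1) (sq_nonneg (a - b)),
    mul_nonneg (sub_nonneg.mpr hc.2) (sq_nonneg (a + b))]

end SwapMat

section Qmat

variable {k : ℕ}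

lemma ang_self {x : Fin k → ℝ} (hx : x ≠ 0) : ang x x = 0 := by
  have hxx : x ⬝ᵥ x ≠ 0 := by
    have h := enorm_pos hx
    rw [enorm_eq_sqrt_dotProduct, Real.sqrt_pos] at h
    exact h.ne'
  rw [ang, dotp_eq_dotProduct, enorm_eq_sqrt_dotProduct,
    Real.mul_self_sqrt (dotProduct_self_nonneg x), div_self hxx, Real.arccos_one]

lemma dotProduct_Qmat_mulVec (x y u : Fin k → ℝ) :
    u ⬝ᵥ Qmat x y *ᵥ u = (π - ang x y) / (2 * π) * (u ⬝ᵥ u)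
      + Real.sin (ang x y) / (2 * π) * (u ⬝ᵥ swapMat x y *ᵥ u) := by
  simp only [Qmat, add_mulVec, smul_mulVec, one_mulVec, dotProduct_add, dotProduct_smul,
    smul_eq_mul]

lemma dotProduct_Qmat_self_mulVec {x : Fin k → ℝ} (hx : x ≠ 0) (u : Fin k → ℝ) :
    u ⬝ᵥ Qmat x x *ᵥ u = (u ⬝ᵥ u) / 2 := by
  rw [dotProduct_Qmat_mulVec, ang_self hx, Real.sin_zero]
  field_simp
  ring

lemma le_dotProduct_Qmat_mulVec {x y : Fin k → ℝ} (hx : x ≠ 0) (hy : y ≠ 0) (u : Fin k → ℝ) :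
    (π - ang x y - Real.sin (ang x y)) / (2 * π) * (u ⬝ᵥ u) ≤ u ⬝ᵥ Qmat x y *ᵥ u := by
  have hsin : 0 ≤ Real.sin (ang x y) / (2 * π) :=
    div_nonneg (Real.sin_nonneg_of_nonneg_of_le_pi (Real.arccos_nonneg _)
      (Real.arccos_le_pi _)) (by positivity)
  have h := mul_le_mul_of_nonneg_left
    (abs_le.mp (abs_dotProduct_swapMat_mulVec_le hx hy u)).1 hsin
  rw [dotProduct_Qmat_mulVec]
  linear_combination h

end Qmat

namespace WDC

variable {n k : ℕ} {W : Matrix (Fin n) (Fin k) ℝ} {ε : ℝ} {x y : Fin k → ℝ}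

lemma abs_dotProduct_posPart_mulVec_sub_le (hW : WDC W ε) (hx : x ≠ 0) (hy : y ≠ 0)
    (u : Fin k → ℝ) :
    |posPart W x *ᵥ u ⬝ᵥ posPart W y *ᵥ u - u ⬝ᵥ Qmat x y *ᵥ u| ≤ ε * (u ⬝ᵥ u) := by
  have h := abs_dotProduct_mulVec_le ((posPart W x)ᵀ * posPart W y - Qmat x y) u
  rw [sub_mulVec, dotProduct_sub, ← mulVec_mulVec, dotProduct_mulVec, vecMul_transpose] at h
  exact h.trans (mul_le_mul_of_nonneg_right (hW x y hx hy) (dotProduct_self_nonneg u))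

lemma dotProduct_posPart_mulVec_self_le (hW : WDC W ε) (hx : x ≠ 0) (u : Fin k → ℝ) :
    posPart W x *ᵥ u ⬝ᵥ posPart W x *ᵥ u ≤ (1 / 2 + ε) * (u ⬝ᵥ u) := by
  have h := (abs_le.mp (hW.abs_dotProduct_posPart_mulVec_sub_le hx hx u)).2
  rw [dotProduct_Qmat_self_mulVec hx] at h
  linarith

lemma le_dotProduct_posPart_mulVec (hW : WDC W ε) (hx : x ≠ 0) (hy : y ≠ 0) (u : Fin k → ℝ) :
    ((π - ang x y - Real.sin (ang x y)) / (2 * π) - ε) * (u ⬝ᵥ u)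
      ≤ posPart W x *ᵥ u ⬝ᵥ posPart W y *ᵥ u := by
  linarith [(abs_le.mp (hW.abs_dotProduct_posPart_mulVec_sub_le hx hy u)).1,
    le_dotProduct_Qmat_mulVec hx hy u]

lemma dotProduct_posPart_sub_mulVec_self_le (hW : WDC W ε) (hx : x ≠ 0) (hy : y ≠ 0)
    (u : Fin k → ℝ) :
    (posPart W x - posPart W y) *ᵥ u ⬝ᵥ (posPart W x - posPart W y) *ᵥ u
      ≤ 2 * (2 * ε + ang x y) * (u ⬝ᵥ u) := by
  set θ := ang x y
  have hθ : 0 ≤ θ := Real.arccos_nonneg _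
  have hcoef : (1 / 2 + ε) + (1 / 2 + ε) - 2 * ((π - θ - Real.sin θ) / (2 * π) - ε)
      ≤ 2 * (2 * ε + θ) := by
    have hsin : Real.sin θ ≤ θ := Real.sin_le hθ
    have hπ : 1 ≤ π := by linarith [Real.pi_gt_three]
    have hratio : (θ + Real.sin θ) / π ≤ 2 * θ := by
      rw [div_le_iff₀ Real.pi_pos]
      nlinarith
    have hπ0 := Real.pi_ne_zero
    calc _ = 4 * ε + (θ + Real.sin θ) / π := by field_simp; ring
      _ ≤ _ := by linarith
  rw [sub_mulVec, sub_dotProduct, dotProduct_sub, dotProduct_sub,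
    dotProduct_comm (posPart W y *ᵥ u)]
  linarith [hW.dotProduct_posPart_mulVec_self_le hx u, hW.dotProduct_posPart_mulVec_self_le hy u,
    hW.le_dotProduct_posPart_mulVec hx hy u,
    mul_le_mul_of_nonneg_right hcoef (dotProduct_self_nonneg u)]

end WDC

lemma posPart_mulVec_apply {n k : ℕ} (W : Matrix (Fin n) (Fin k) ℝ) (x z : Fin k → ℝ)
    (i : Fin n) : (posPart W x *ᵥ z) i = if 0 < (W *ᵥ x) i then (W *ᵥ z) i else 0 := by
  simp only [posPart, rowFilter, mulVec, dotProduct]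
  split_ifs <;> simp

lemma enorm_posPart_sub_mulVec_le {n k : ℕ} (W : Matrix (Fin n) (Fin k) ℝ)
    (x y : Fin k → ℝ) :
    enorm ((posPart W x - posPart W y) *ᵥ y)
      ≤ enorm ((posPart W x - posPart W y) *ᵥ (x - y)) := by
  refine Real.sqrt_le_sqrt (Finset.sum_le_sum fun i _ => ?_)
  simp only [sub_mulVec, Pi.sub_apply, posPart_mulVec_apply, mulVec_sub]
  split_ifs with hx hy hy <;> nlinarith

theorem statement_15 (n k : ℕ) (W : Matrix (Fin n) (Fin k) ℝ) (ε : ℝ)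
    (hW : WDC W ε) :
    ∀ x y : Fin k → ℝ, x ≠ 0 → y ≠ 0 →
      enorm ((posPart W x).mulVec x - (posPart W y).mulVec y)
        ≤ (Real.sqrt (1 / 2 + ε) + Real.sqrt (2 * (2 * ε + ang x y)))
            * enorm (x - y) := by
  intro x y hx hy
  have hsplit : posPart W x *ᵥ x - posPart W y *ᵥ y
      = posPart W x *ᵥ (x - y) + (posPart W x - posPart W y) *ᵥ y := by
    rw [mulVec_sub, sub_mulVec]
    abel
  rw [hsplit, add_mul]
  calc _ ≤ enorm (posPart W x *ᵥ (x - y)) + enorm ((posPart W x - posPart W y) *ᵥ y) :=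
        enorm_add_le _ _
    _ ≤ enorm (posPart W x *ᵥ (x - y)) + enorm ((posPart W x - posPart W y) *ᵥ (x - y)) :=
        add_le_add_right (enorm_posPart_sub_mulVec_le W x y) _
    _ ≤ _ := add_le_add
        (enorm_le_sqrt_mul_enorm (hW.dotProduct_posPart_mulVec_self_le hx (x - y)))
        (enorm_le_sqrt_mul_enorm (hW.dotProduct_posPart_sub_mulVec_self_le hx hy (x - y)))

end CSGen
end
end
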